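/- arXiv:1210.2478 — 4 statements merged into one kernel-verified Lean document; each statement's English description precedes it below -/
import Mathlib

section
/- For prime p = 5, the Minkowski sum Σ_5({0,1}) + Σ_5({0,2}) equals Σ_5({0,1,2,3}). -/
open scoped Pointwise

/-- The `k`-th digit of the `p`-adic expansion of `x`, i.e. `x = ∑ α_k p^k` with
`α_k ∈ {0,...,p-1}`. -/
noncomputable def padicDigit (p : ℕ) [Fact p.Prime] (x : ℤ_[p]) (k : ℕ) : ℕ :=
  x.appr (k + 1) / p ^ k % p

/-- `Σ_p(D)`: the set of `p`-adic integers all of whose `p`-adic digits lie in `D`. -/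
def SigmaSet (p : ℕ) [Fact p.Prime] (D : Set ℕ) : Set ℤ_[p] :=
  {x | ∀ k, padicDigit p x k ∈ D}

instance : Fact (Nat.Prime 5) := ⟨by norm_num⟩

/-!
A `p`-adic integer is the sum `∑ αₖ pᵏ` of its digits, and this series is additive in the digit
sequence. So if every sum of a digit in `D` and a digit in `E` stays below `p`, digits add without
carry and `Σ_p(D) + Σ_p(E) = Σ_p(D + E)`. For `p = 5` this applies to `{0, 1} + {0, 2} = {0, 1, 2, 3}`.
-/

open Finset

section DigitSums

variable {p : ℕ} {d : ℕ → ℕ}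

lemma sum_digits_mul_pow_lt (hd : ∀ i, d i < p) (n : ℕ) :
    ∑ i ∈ range n, d i * p ^ i < p ^ n := by
  induction n with
  | zero => simp
  | succ n ih =>
    calc ∑ i ∈ range (n + 1), d i * p ^ i
        < p ^ n + d n * p ^ n := by rw [sum_range_succ]; omega
      _ = (d n + 1) * p ^ n := by ring
      _ ≤ p * p ^ n := Nat.mul_le_mul_right _ (hd n)
      _ = p ^ (n + 1) := by ring

lemma sum_digits_mul_pow_div_pow_mod (hd : ∀ i, d i < p) (k : ℕ) :
    (∑ i ∈ range (k + 1), d i * p ^ i) / p ^ k % p = d k := by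
  have hpk : 0 < p ^ k := pow_pos ((Nat.zero_le _).trans_lt (hd 0)) k
  rw [sum_range_succ, Nat.add_mul_div_right _ _ hpk,
    Nat.div_eq_of_lt (sum_digits_mul_pow_lt hd k), zero_add, Nat.mod_eq_of_lt (hd k)]

end DigitSums

namespace PadicInt

variable {p : ℕ} [Fact p.Prime]

theorem appr_eq_of_sub_mem_span {x : ℤ_[p]} {m n : ℕ} (hm : m < p ^ n)
    (h : x - m ∈ Ideal.span {(p : ℤ_[p]) ^ n}) : x.appr n = m := by
  have := zmod_congr_of_sub_mem_span n x _ _ (appr_spec n x) h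
  rwa [ZMod.natCast_eq_natCast_iff', Nat.mod_eq_of_lt (appr_lt x n), Nat.mod_eq_of_lt hm] at this

theorem eq_of_forall_sub_mem_span_pow {x y : ℤ_[p]}
    (h : ∀ n, x - y ∈ Ideal.span {(p : ℤ_[p]) ^ n}) : x = y := by
  refine ext_of_toZModPow.mp fun n => ?_
  rw [← sub_eq_zero, ← map_sub, ← RingHom.mem_ker, ker_toZModPow]
  exact h n

end PadicInt

section PadicDigits

noncomputable def padicOfDigits (p : ℕ) [Fact p.Prime] (d : ℕ → ℕ) : ℤ_[p] :=
  ∑' i, (d i : ℤ_[p]) * (p : ℤ_[p]) ^ i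

variable {p : ℕ} [Fact p.Prime]

lemma summable_digits_mul_pow (d : ℕ → ℕ) :
    Summable fun i => (d i : ℤ_[p]) * (p : ℤ_[p]) ^ i := by
  refine NonarchimedeanAddGroup.summable_of_tendsto_cofinite_zero ?_
  rw [Nat.cofinite_eq_atTop, tendsto_zero_iff_norm_tendsto_zero]
  have hp : ‖(p : ℤ_[p])‖ < 1 := by
    rw [PadicInt.norm_p]
    exact inv_lt_one_of_one_lt₀ (mod_cast (Fact.out : p.Prime).one_lt)
  refine squeeze_zero (fun _ => norm_nonneg _) (fun i => ?_)
    (tendsto_pow_atTop_nhds_zero_of_lt_one (norm_nonneg _) hp)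
  calc ‖(d i : ℤ_[p]) * (p : ℤ_[p]) ^ i‖
      = ‖(d i : ℤ_[p])‖ * ‖(p : ℤ_[p])‖ ^ i := by rw [norm_mul, norm_pow]
    _ ≤ ‖(p : ℤ_[p])‖ ^ i := mul_le_of_le_one_left (by positivity) (PadicInt.norm_le_one _)

lemma padicOfDigits_add (a b : ℕ → ℕ) :
    padicOfDigits p (a + b) = padicOfDigits p a + padicOfDigits p b := by
  simp only [padicOfDigits, Pi.add_apply, Nat.cast_add, add_mul]
  exact (summable_digits_mul_pow a).tsum_add (summable_digits_mul_pow b)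

lemma padicOfDigits_sub_sum_mem_span (d : ℕ → ℕ) (n : ℕ) :
    padicOfDigits p d - ((∑ i ∈ range n, d i * p ^ i : ℕ) : ℤ_[p]) ∈
      Ideal.span {(p : ℤ_[p]) ^ n} := by
  have htail : ∑' i, (d (i + n) : ℤ_[p]) * (p : ℤ_[p]) ^ (i + n) =
      (p : ℤ_[p]) ^ n * ∑' i, (d (i + n) : ℤ_[p]) * (p : ℤ_[p]) ^ i := by
    rw [← (summable_digits_mul_pow (d <| · + n)).tsum_mul_left]
    congr 1 with i
    ring
  rw [padicOfDigits, ← (summable_digits_mul_pow d).sum_add_tsum_nat_add n, htail]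
  push_cast
  rw [add_sub_cancel_left]
  exact Ideal.mul_mem_right _ _ (Ideal.mem_span_singleton_self _)

lemma appr_padicOfDigits {d : ℕ → ℕ} (hd : ∀ i, d i < p) (n : ℕ) :
    (padicOfDigits p d).appr n = ∑ i ∈ range n, d i * p ^ i :=
  PadicInt.appr_eq_of_sub_mem_span (sum_digits_mul_pow_lt hd n)
    (padicOfDigits_sub_sum_mem_span d n)

lemma padicDigit_padicOfDigits {d : ℕ → ℕ} (hd : ∀ i, d i < p) :
    padicDigit p (padicOfDigits p d) = d := by
  ext k
  rw [padicDigit, appr_padicOfDigits hd, sum_digits_mul_pow_div_pow_mod hd]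

lemma appr_eq_sum_padicDigit (x : ℤ_[p]) (n : ℕ) :
    x.appr n = ∑ i ∈ range n, padicDigit p x i * p ^ i := by
  induction n with
  | zero => simp [PadicInt.appr]
  | succ n ih =>
    obtain ⟨c, hc⟩ := x.dvd_appr_sub_appr n (n + 1) n.le_succ
    have hstep : x.appr (n + 1) = x.appr n + c * p ^ n := by
      have : x.appr n ≤ x.appr (n + 1) := x.appr_mono n.le_succ
      rw [mul_comm]
      omega
    have hc_lt : c < p := by
      have := x.appr_lt (n + 1)
      rw [hstep, pow_succ'] at this
      exact Nat.lt_of_mul_lt_mul_right (by omega : c * p ^ n < p * p ^ n)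
    have hdigit : padicDigit p x n = c := by
      rw [padicDigit, hstep, Nat.add_mul_div_right _ _ (pow_pos (Fact.out : p.Prime).pos n),
        Nat.div_eq_of_lt (x.appr_lt n), zero_add, Nat.mod_eq_of_lt hc_lt]
    rw [sum_range_succ, ← ih, hdigit, hstep]

lemma padicOfDigits_padicDigit (x : ℤ_[p]) : padicOfDigits p (padicDigit p x) = x := by
  refine PadicInt.eq_of_forall_sub_mem_span_pow fun n => ?_
  have hx := PadicInt.appr_spec n x
  rw [appr_eq_sum_padicDigit] at hx
  simpa using Ideal.sub_mem _ (padicOfDigits_sub_sum_mem_span (padicDigit p x) n) hx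

lemma padicDigit_add_of_add_lt {x y : ℤ_[p]}
    (h : ∀ i, padicDigit p x i + padicDigit p y i < p) :
    padicDigit p (x + y) = padicDigit p x + padicDigit p y := by
  conv_lhs => rw [← padicOfDigits_padicDigit x, ← padicOfDigits_padicDigit y]
  rw [← padicOfDigits_add, padicDigit_padicOfDigits (d := padicDigit p x + padicDigit p y) h]

theorem sigmaSet_add_sigmaSet {D E : Set ℕ} (h : ∀ a ∈ D, ∀ b ∈ E, a + b < p) :
    SigmaSet p D + SigmaSet p E = SigmaSet p (D + E) := by
  ext z
  constructor
  · rintro ⟨x, hx, y, hy, rfl⟩ k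
    rw [padicDigit_add_of_add_lt fun i => h _ (hx i) _ (hy i)]
    exact Set.add_mem_add (hx k) (hy k)
  · intro hz
    choose a ha b hb hab using hz
    have hsum : ∀ k, a k + b k < p := fun k => h _ (ha k) _ (hb k)
    refine ⟨padicOfDigits p a, ?_, padicOfDigits p b, ?_, ?_⟩
    · intro k
      rw [padicDigit_padicOfDigits fun i => (Nat.le_add_right _ _).trans_lt (hsum i)]
      exact ha k
    · intro k
      rw [padicDigit_padicOfDigits fun i => (Nat.le_add_left _ _).trans_lt (hsum i)]
      exact hb k
    · show padicOfDigits p a + padicOfDigits p b = z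
      rw [← padicOfDigits_add, show a + b = padicDigit p z from funext hab,
        padicOfDigits_padicDigit]

end PadicDigits

/-- Σ₅({0,1}) + Σ₅({0,2}) = Σ₅({0,1,2,3}) (Minkowski sum in ℤ₅). -/
theorem minkowski_sum_cantor_5_12 :
    SigmaSet 5 {0, 1} + SigmaSet 5 {0, 2} = SigmaSet 5 {0, 1, 2, 3} := by
  rw [sigmaSet_add_sigmaSet (by rintro a (rfl | rfl) b (rfl | rfl) <;> norm_num)]
  congr 1
  ext n
  simp only [Set.mem_add, Set.mem_insert_iff, Set.mem_singleton_iff, or_and_right, exists_or,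
    exists_eq_left]
  omega
end

section
/- If r ∈ ℚ is a rational number with |r|_p ≤ 1 (i.e., r is p-integral), then the p-adic digit sequence of r, viewed as an element of ℤ_p, is eventually periodic. -/
open scoped Pointwise

/-!
Let `σ x = (x - d₀(x)) / p` drop the lowest digit of a `p`-adic integer, so that the `k`-th digit
of `x` is the lowest digit of `σᵏ x`. If `b x = a` with `a, b ∈ ℤ`, `b > 0`, then
`b σ(x) = (a - d₀ b) / p` is again an integer, and `|a| ≤ C`, `b ≤ C` force
`|(a - d₀ b) / p| ≤ C`. Hence the orbit of `r = a / b` under `σ` stays in a finite set, so it is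
eventually periodic, and so are the digits.
-/

namespace PadicInt

variable {p : ℕ} [Fact p.Prime]

theorem appr_eq_of_dvd_sub {x : ℤ_[p]} {n a : ℕ} (ha : a < p ^ n)
    (hx : (p : ℤ_[p]) ^ n ∣ x - a) : x.appr n = a := by
  have hdvd : (p : ℤ_[p]) ^ n ∣ ((a - x.appr n : ℤ) : ℤ_[p]) := by
    convert dvd_sub (Ideal.mem_span_singleton.mp (x.appr_spec n)) hx using 1
    push_cast
    ring
  have hmod : x.appr n ≡ a [MOD p ^ n] :=
    Nat.modEq_iff_dvd.mpr (by exact_mod_cast (pow_p_dvd_int_iff n _).mp hdvd)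
  exact hmod.eq_of_lt_of_lt (x.appr_lt n) ha

theorem p_dvd_sub_appr_one (x : ℤ_[p]) : (p : ℤ_[p]) ∣ x - x.appr 1 := by
  simpa using Ideal.mem_span_singleton.mp (x.appr_spec 1)

/-- The shift `x ↦ (x - d₀(x)) / p` dropping the lowest `p`-adic digit. -/
noncomputable def shift (x : ℤ_[p]) : ℤ_[p] := (p_dvd_sub_appr_one x).choose

theorem p_mul_shift (x : ℤ_[p]) : (p : ℤ_[p]) * shift x = x - x.appr 1 :=
  (p_dvd_sub_appr_one x).choose_spec.symm

theorem appr_one_lt (x : ℤ_[p]) : x.appr 1 < p := by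
  simpa using x.appr_lt 1

theorem appr_succ_eq (x : ℤ_[p]) (n : ℕ) :
    x.appr (n + 1) = x.appr 1 + p * (shift x).appr n := by
  apply appr_eq_of_dvd_sub
  · calc x.appr 1 + p * (shift x).appr n < p + p * (shift x).appr n := by
          have := x.appr_one_lt; omega
      _ = p * ((shift x).appr n + 1) := by ring
      _ ≤ p * p ^ n := Nat.mul_le_mul_left _ ((shift x).appr_lt n)
      _ = p ^ (n + 1) := by ring
  · obtain ⟨c, hc⟩ := Ideal.mem_span_singleton.mp ((shift x).appr_spec n)
    refine ⟨c, ?_⟩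
    push_cast
    linear_combination (p : ℤ_[p]) * hc - p_mul_shift x

def fractionsWithDen (b : ℕ) (C : ℤ) : Set ℤ_[p] :=
  {y | ∃ a : ℤ, |a| ≤ C ∧ (b : ℤ_[p]) * y = a}

theorem finite_fractionsWithDen {b : ℕ} (hb : b ≠ 0) (C : ℤ) :
    (fractionsWithDen b C : Set ℤ_[p]).Finite := by
  refine Set.Finite.of_finite_image (f := ((b : ℤ_[p]) * ·)) ?_
    (mul_right_injective₀ (Nat.cast_ne_zero.mpr hb)).injOn
  refine ((Set.finite_Icc (-C) C).image ((↑) : ℤ → ℤ_[p])).subset ?_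
  rintro _ ⟨y, ⟨a, ha, hy⟩, rfl⟩
  exact ⟨a, abs_le.mp ha, hy.symm⟩

theorem mapsTo_shift_fractionsWithDen {b : ℕ} {C : ℤ} (hbC : (b : ℤ) ≤ C) :
    Set.MapsTo (shift (p := p)) (fractionsWithDen b C) (fractionsWithDen b C) := by
  rintro y ⟨a, ha, hy⟩
  set d := y.appr 1
  have hd : (d : ℤ) < p := by exact_mod_cast y.appr_one_lt
  have hmul : (p : ℤ_[p]) * ((b : ℤ_[p]) * shift y) = ((a - b * d : ℤ) : ℤ_[p]) := by
    push_cast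
    linear_combination (b : ℤ_[p]) * p_mul_shift y + hy
  obtain ⟨a', ha'⟩ : (p : ℤ) ∣ a - b * d := by
    simpa using (pow_p_dvd_int_iff 1 _).mp (by rw [pow_one]; exact ⟨_, hmul.symm⟩)
  refine ⟨a', ?_, ?_⟩
  · -- `|p a'| ≤ |a| + b d ≤ C + C (p - 1)`
    have hp : (0 : ℤ) < p := by exact_mod_cast (Nat.Prime.pos Fact.out)
    have hb : (0 : ℤ) ≤ b := by positivity
    have hd0 : (0 : ℤ) ≤ d := by positivity
    rw [abs_le] at ha ⊢
    constructor <;> nlinarith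
  · have hp0 : (p : ℤ_[p]) ≠ 0 := Nat.cast_ne_zero.mpr (Nat.Prime.ne_zero Fact.out)
    refine mul_left_cancel₀ hp0 ?_
    rw [hmul, ha']
    push_cast
    ring

end PadicInt

open PadicInt

section Digits

variable {p : ℕ} [Fact p.Prime]

theorem padicDigit_succ (x : ℤ_[p]) (k : ℕ) :
    padicDigit p x (k + 1) = padicDigit p (shift x) k := by
  rw [padicDigit, padicDigit, appr_succ_eq, pow_succ', ← Nat.div_div_eq_div_mul,
    Nat.add_mul_div_left _ _ (Nat.Prime.pos Fact.out), Nat.div_eq_of_lt x.appr_one_lt, zero_add]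

theorem padicDigit_eq_padicDigit_iterate_shift (x : ℤ_[p]) (k : ℕ) :
    padicDigit p x k = padicDigit p (shift^[k] x) 0 := by
  induction k generalizing x with
  | zero => rfl
  | succ k ih => rw [padicDigit_succ, ih, Function.iterate_succ_apply]

theorem padicDigit_add_eq_of_iterate_shift_eq {x : ℤ_[p]} {i Q : ℕ}
    (h : shift^[i + Q] x = shift^[i] x) {k : ℕ} (hk : i ≤ k) :
    padicDigit p x (k + Q) = padicDigit p x k := by
  obtain ⟨m, rfl⟩ := Nat.exists_eq_add_of_le hk
  rw [padicDigit_eq_padicDigit_iterate_shift x, padicDigit_eq_padicDigit_iterate_shift x (i + m),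
    show i + m + Q = m + (i + Q) by ring, Function.iterate_add_apply, h,
    ← Function.iterate_add_apply, add_comm m]

end Digits

/-- If r ∈ ℚ is p-integral (|r|_p ≤ 1), then the p-adic digit sequence of r,
viewed as an element of ℤ_p, is eventually periodic. -/
theorem padic_digits_of_rat_eventually_periodic (p : ℕ) [Fact p.Prime]
    (r : ℚ) (h : ‖(r : ℚ_[p])‖ ≤ 1) :
    ∃ Q₀ Q : ℕ, 1 ≤ Q ∧ ∀ k, Q₀ ≤ k →
      padicDigit p (⟨(r : ℚ_[p]), h⟩ : ℤ_[p]) (k + Q) =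
        padicDigit p (⟨(r : ℚ_[p]), h⟩ : ℤ_[p]) k := by
  set x : ℤ_[p] := ⟨(r : ℚ_[p]), h⟩
  set S : Set ℤ_[p] := fractionsWithDen r.den (max |r.num| r.den)
  have hx : x ∈ S := by
    refine ⟨r.num, le_max_left _ _, Subtype.ext ?_⟩
    change (r.den : ℚ_[p]) * r = r.num
    exact_mod_cast Rat.den_mul_eq_num r
  have horbit (n : ℕ) : shift^[n] x ∈ S :=
    (mapsTo_shift_fractionsWithDen (le_max_right _ _)).iterate n hx
  obtain ⟨i, j, hij, hperiod⟩ :=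
    (finite_fractionsWithDen r.den_nz _).exists_lt_map_eq_of_forall_mem horbit
  refine ⟨i, j - i, by omega, fun k hk => padicDigit_add_eq_of_iterate_shift_eq ?_ hk⟩
  rw [Nat.add_sub_cancel' hij.le, hperiod]
end

section
/- For a prime p and nonempty digit set D ⊆ {0,...,p-1} with |D| ≥ 1, the Hausdorff dimension of Σ_p(D) as a subset of the metric space ℤ_p equals log |D| / log p. -/
open scoped Pointwise

/-!
Let `θ = log |D| / log p`, so that `|D| · (p⁻¹)^θ = 1`. The points of `Σ_p(D)` with prescribed
first `n` digits form `|D|^n` cylinders of diameter at most `p⁻ⁿ`, which gives `dimH ≤ θ`.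
Conversely, renumber `D` as `0, …, |D| - 1` and read the renumbered digits of `x` as a base-`|D|`
expansion of a real number. This maps `Σ_p(D)` onto `[0, 1]`, and points at distance `p⁻ⁿ` agree
in their first `n` digits, so their images are within `|D|⁻ⁿ = (p⁻ⁿ)^θ`: the map is `θ`-Hölder,
and a `θ`-Hölder image of dimension `1` forces `dimH ≥ θ`.
-/

open scoped NNReal ENNReal
open Filter MeasureTheory Metric Set

theorem ENNReal.rpow_pow_comm (x : ℝ≥0∞) (y : ℝ) (n : ℕ) : (x ^ y) ^ n = (x ^ n) ^ y := by
  rw [← ENNReal.rpow_natCast, ← ENNReal.rpow_natCast, ← ENNReal.rpow_mul, ← ENNReal.rpow_mul,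
    mul_comm]

section HausdorffDimension

variable {X : Type*} [EMetricSpace X]

theorem dimH_le_of_forall_pow_cover {ι : Type*} [Fintype ι] {r : ℝ≥0∞} (hr : r < 1)
    {d : ℝ≥0} (hd : Fintype.card ι * r ^ (d : ℝ) ≤ 1) {s : Set X}
    (t : (n : ℕ) → (Fin n → ι) → Set X) (ht : ∀ n a, ediam (t n a) ≤ r ^ n)
    (hs : ∀ n, s ⊆ ⋃ a, t n a) : dimH s ≤ d := by
  borelize X
  refine dimH_le_of_hausdorffMeasure_ne_top (ne_top_of_le_ne_top ENNReal.one_ne_top ?_)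
  refine (Measure.hausdorffMeasure_le_liminf_sum _ s _
    (ENNReal.tendsto_pow_atTop_nhds_zero_of_lt_one hr) t (.of_forall fun n => ht n)
    (.of_forall hs)).trans (liminf_le_of_frequently_le' (.of_forall fun n => ?_))
  calc ∑ a, ediam (t n a) ^ (d : ℝ) ≤ ∑ _a : Fin n → ι, (r ^ n) ^ (d : ℝ) :=
        Finset.sum_le_sum fun a _ => ENNReal.rpow_le_rpow (ht n a) d.2
    _ = (Fintype.card ι * r ^ (d : ℝ)) ^ n := by
        rw [Finset.sum_const, Finset.card_univ, Fintype.card_fun, Fintype.card_fin, nsmul_eq_mul,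
          Nat.cast_pow, mul_pow, ENNReal.rpow_pow_comm]
    _ ≤ 1 := pow_le_one₀ zero_le hd

theorem le_dimH_of_holderWith_of_Icc_subset_image {f : X → ℝ} {C r : ℝ≥0} (hr : 0 < r)
    (hf : HolderWith C r f) {s : Set X} {a b : ℝ} (hab : a < b) (hs : Icc a b ⊆ f '' s) :
    (r : ℝ≥0∞) ≤ dimH s := by
  have hIcc : dimH (Icc a b) = 1 := by
    simpa using Real.dimH_of_mem_nhds (Icc_mem_nhds (by linarith : a < (a + b) / 2) (by linarith))
  have h := (hIcc ▸ dimH_mono hs).trans (hf.dimH_image_le hr s)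
  rwa [ENNReal.le_div_iff_mul_le (.inl (by exact_mod_cast hr.ne')) (.inl ENNReal.coe_ne_top),
    one_mul] at h

end HausdorffDimension

theorem ENNReal.ofReal_natCast_zpow_neg {b : ℕ} (hb : b ≠ 0) (n : ℕ) :
    ENNReal.ofReal ((b : ℝ) ^ (-n : ℤ)) = (b : ℝ≥0∞)⁻¹ ^ n := by
  simp [ENNReal.ofReal_pow, ENNReal.ofReal_inv_of_pos, Nat.pos_of_ne_zero hb, ENNReal.inv_pow]

theorem ENNReal.inv_natCast_rpow_logb {b n : ℕ} (hb : 1 < b) (hn : 0 < n) :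
    (b : ℝ≥0∞)⁻¹ ^ Real.logb b n = (n : ℝ≥0∞)⁻¹ := by
  rw [ENNReal.inv_rpow, ← ENNReal.ofReal_natCast b, ENNReal.ofReal_rpow_of_pos (by positivity),
    Real.rpow_logb (by positivity) (by exact_mod_cast hb.ne') (by positivity),
    ENNReal.ofReal_natCast]

theorem Nat.sum_range_pow_mul_lt_pow {b : ℕ} {a : ℕ → ℕ} (ha : ∀ k, a k < b) (n : ℕ) :
    ∑ k ∈ Finset.range n, b ^ k * a k < b ^ n := by
  induction n with
  | zero => simp
  | succ n ih =>
    rw [Finset.sum_range_succ, pow_succ]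
    nlinarith [ha n, pow_pos ((zero_le _).trans_lt (ha 0)) n]

namespace PadicInt

variable {p : ℕ} [Fact p.Prime]

theorem appr_eq_iff_toZModPow_eq {x : ℤ_[p]} {n m : ℕ} (hm : m < p ^ n) :
    x.appr n = m ↔ x.toZModPow n = m := by
  change _ ↔ ((x.appr n : ℕ) : ZMod (p ^ n)) = m
  rw [ZMod.natCast_eq_natCast_iff', Nat.mod_eq_of_lt (x.appr_lt n), Nat.mod_eq_of_lt hm]

theorem appr_eq_appr_iff_norm_sub_le {x y : ℤ_[p]} {n : ℕ} :
    x.appr n = y.appr n ↔ ‖x - y‖ ≤ p ^ (-n : ℤ) := by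
  rw [appr_eq_iff_toZModPow_eq (y.appr_lt n), norm_le_pow_iff_mem_span_pow, ← ker_toZModPow,
    RingHom.mem_ker, map_sub, sub_eq_zero]
  rfl

theorem appr_eq_appr_iff_edist_le {x y : ℤ_[p]} {n : ℕ} :
    x.appr n = y.appr n ↔ edist x y ≤ (p : ℝ≥0∞)⁻¹ ^ n := by
  rw [edist_dist, dist_eq_norm, ← ENNReal.ofReal_natCast_zpow_neg (Fact.out : p.Prime).ne_zero,
    ENNReal.ofReal_le_ofReal_iff (by positivity), appr_eq_appr_iff_norm_sub_le]

theorem appr_mod_pow (x : ℤ_[p]) {k m : ℕ} (h : k ≤ m) : x.appr m % p ^ k = x.appr k :=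
  Eq.trans ((Nat.modEq_iff_dvd' (x.appr_mono h)).2 (x.dvd_appr_sub_appr k m h)).symm
    (Nat.mod_eq_of_lt (x.appr_lt k))

theorem exists_appr_eq {a : ℕ → ℕ} (hlt : ∀ n, a n < p ^ n)
    (hmod : ∀ n, a n ≡ a (n + 1) [MOD p ^ n]) : ∃ x : ℤ_[p], ∀ n, x.appr n = a n := by
  have hdvd : ∀ n, (p : ℤ) ^ n ∣ (a (n + 1) : ℤ) - a n := fun n => by
    exact_mod_cast Nat.modEq_iff_dvd.1 (hmod n)
  refine ⟨ofIntSeq _ (isCauSeq_padicNorm_of_pow_dvd_sub (a ·) p hdvd), fun n => ?_⟩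
  rw [appr_eq_iff_toZModPow_eq (hlt n), toZModPow_ofIntSeq_of_pow_dvd_sub (a ·) p hdvd,
    Int.cast_natCast]

theorem appr_succ (x : ℤ_[p]) (k : ℕ) :
    x.appr (k + 1) = x.appr k + p ^ k * padicDigit p x k := by
  have h := Nat.mod_pow_succ (x := x.appr (k + 1)) (b := p) (k := k)
  rwa [Nat.mod_eq_of_lt (x.appr_lt _), x.appr_mod_pow k.le_succ] at h

theorem appr_eq_appr_iff_padicDigit_eq {x y : ℤ_[p]} {n : ℕ} :
    x.appr n = y.appr n ↔ ∀ k < n, padicDigit p x k = padicDigit p y k := by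
  refine ⟨fun h k hk => ?_, fun h => ?_⟩
  · rw [padicDigit, padicDigit, ← x.appr_mod_pow hk, ← y.appr_mod_pow hk, h]
  · induction n with
    | zero => rfl
    | succ n ih =>
      rw [x.appr_succ, y.appr_succ, ih fun k hk => h k (by omega), h n n.lt_succ_self]

end PadicInt

section SigmaSet

variable {p : ℕ} [Fact p.Prime]

theorem exists_padicDigit_eq {a : ℕ → ℕ} (ha : ∀ k, a k < p) :
    ∃ x : ℤ_[p], ∀ k, padicDigit p x k = a k := by
  obtain ⟨x, hx⟩ := PadicInt.exists_appr_eq (Nat.sum_range_pow_mul_lt_pow ha) fun n => by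
    simp [Finset.sum_range_succ, Nat.ModEq, Nat.add_mul_mod_self_left]
  refine ⟨x, fun k => Nat.eq_of_mul_eq_mul_left (pow_pos (Fact.out : p.Prime).pos k) ?_⟩
  have h := x.appr_succ k
  rw [hx, hx, Finset.sum_range_succ] at h
  omega

theorem dimH_sigmaSet_le {D : Finset ℕ} {θ : ℝ≥0} (hθ : D.card * (p : ℝ≥0∞)⁻¹ ^ (θ : ℝ) ≤ 1) :
    dimH (SigmaSet p D) ≤ θ := by
  refine dimH_le_of_forall_pow_cover (ι := D)
    (ENNReal.inv_lt_one.2 (Nat.one_lt_cast.2 (Fact.out : p.Prime).one_lt)) (by simpa using hθ)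
    (fun n a => {x | ∀ k : Fin n, padicDigit p x k = a k}) (fun n a => ediam_le fun x hx y hy => ?_)
    fun n x hx => mem_iUnion.2 ⟨fun k => ⟨_, hx k⟩, fun k => rfl⟩
  rw [← PadicInt.appr_eq_appr_iff_edist_le, PadicInt.appr_eq_appr_iff_padicDigit_eq]
  exact fun k hk => (hx ⟨k, hk⟩).trans (hy ⟨k, hk⟩).symm

noncomputable def digitIndex (D : Finset ℕ) [NeZero D.card] (d : ℕ) : Fin D.card :=
  if h : d ∈ D then D.equivFin ⟨d, h⟩ else 0

variable (p) in
noncomputable def sigmaCoding (D : Finset ℕ) [NeZero D.card] (x : ℤ_[p]) : ℝ :=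
  Real.ofDigits fun k => digitIndex D (padicDigit p x k)

section Coding

variable {D : Finset ℕ} [NeZero D.card]

theorem holderWith_sigmaCoding {θ : ℝ≥0} (hθ : (p : ℝ≥0∞)⁻¹ ^ (θ : ℝ) = (D.card : ℝ≥0∞)⁻¹) :
    HolderWith 1 θ (sigmaCoding p D) := by
  intro x y
  rcases eq_or_ne x y with rfl | hne
  · simp
  set v := (x - y).valuation
  have hxy : edist x y = (p : ℝ≥0∞)⁻¹ ^ v := by
    rw [edist_dist, dist_eq_norm, PadicInt.norm_eq_zpow_neg_valuation (sub_ne_zero.2 hne),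
      ENNReal.ofReal_natCast_zpow_neg (Fact.out : p.Prime).ne_zero]
  have hdigits := PadicInt.appr_eq_appr_iff_padicDigit_eq.1
    (PadicInt.appr_eq_appr_iff_edist_le.2 hxy.le)
  calc edist (sigmaCoding p D x) (sigmaCoding p D y)
      ≤ ENNReal.ofReal (((D.card : ℝ) ^ v)⁻¹) := by
        rw [edist_dist, Real.dist_eq, sigmaCoding, sigmaCoding]
        exact ENNReal.ofReal_le_ofReal
          (Real.abs_ofDigits_sub_ofDigits_le fun k hk => by rw [hdigits k hk])
    _ = (D.card : ℝ≥0∞)⁻¹ ^ v := by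
        rw [← ENNReal.ofReal_natCast_zpow_neg (NeZero.ne D.card), zpow_neg, zpow_natCast]
    _ = 1 * edist x y ^ (θ : ℝ) := by rw [one_mul, hxy, ← ENNReal.rpow_pow_comm, hθ]

theorem Icc_subset_image_sigmaCoding (hDp : ∀ d ∈ D, d < p) (hD : 1 < D.card) :
    Icc 0 1 ⊆ sigmaCoding p D '' SigmaSet p D := by
  intro y hy
  obtain ⟨b, -, rfl⟩ := Real.ofDigits_SurjOn hD hy
  obtain ⟨x, hx⟩ := exists_padicDigit_eq fun k => hDp _ (D.equivFin.symm (b k)).2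
  refine ⟨x, fun k => hx k ▸ (D.equivFin.symm (b k)).2, ?_⟩
  simp [sigmaCoding, digitIndex, hx]

end Coding

theorem le_dimH_sigmaSet {D : Finset ℕ} (hDp : ∀ d ∈ D, d < p) (hD : 1 < D.card) {θ : ℝ≥0}
    (hθ : (p : ℝ≥0∞)⁻¹ ^ (θ : ℝ) = (D.card : ℝ≥0∞)⁻¹) : (θ : ℝ≥0∞) ≤ dimH (SigmaSet p D) := by
  have hθ_pos : 0 < θ := pos_of_ne_zero fun h => by
    rw [h, NNReal.coe_zero, ENNReal.rpow_zero, eq_comm, ENNReal.inv_eq_one, Nat.cast_eq_one] at hθ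
    omega
  have : NeZero D.card := ⟨by omega⟩
  exact le_dimH_of_holderWith_of_Icc_subset_image hθ_pos (holderWith_sigmaCoding hθ) one_pos
    (Icc_subset_image_sigmaCoding hDp hD)

end SigmaSet

theorem sigmaSet_dimH_general (p : ℕ) [Fact p.Prime] (D : Finset ℕ)
    (hDp : ∀ d ∈ D, d < p) :
    dimH (SigmaSet p (↑D : Set ℕ)) =
      ENNReal.ofReal (Real.log (D.card) / Real.log p) := by
  have hp : 1 < p := (Fact.out : p.Prime).one_lt
  rw [Real.log_div_log]
  rcases Nat.lt_or_ge D.card 2 with hD | hD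
  · have hθ : Real.logb p D.card = 0 := by
      obtain h | h : D.card = 0 ∨ D.card = 1 := by omega
      all_goals simp [h]
    rw [hθ, ENNReal.ofReal_zero]
    exact le_antisymm (dimH_sigmaSet_le (by simpa using hD)) zero_le
  · have hθ : (p : ℝ≥0∞)⁻¹ ^ ((Real.logb p D.card).toNNReal : ℝ) = (D.card : ℝ≥0∞)⁻¹ := by
      rw [Real.coe_toNNReal _
        (Real.logb_nonneg (by exact_mod_cast hp) (by exact_mod_cast one_le_two.trans hD))]
      exact ENNReal.inv_natCast_rpow_logb hp (by omega)
    refine le_antisymm (dimH_sigmaSet_le ?_) (le_dimH_sigmaSet hDp hD hθ)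
    rw [hθ, ENNReal.mul_inv_cancel (Nat.cast_ne_zero.2 (by omega)) (ENNReal.natCast_ne_top _)]

/-- The Hausdorff dimension of Σ_p(D) equals log |D| / log p. -/
theorem sigmaSet_dimH (p : ℕ) [Fact p.Prime] (D : Finset ℕ)
    (hD : D.Nonempty) (hDp : ∀ d ∈ D, d < p) :
    dimH (SigmaSet p (↑D : Set ℕ)) =
      ENNReal.ofReal (Real.log (D.card) / Real.log p) :=
  sigmaSet_dimH_general p D hDp
end

section
/- Let A be a nonnegative square integer matrix and let N_k(A) = eᵀ A^k e where e is the all-ones vector. Then the limit lim_{k→∞} N_k(A)^{1/k} exists and equals the spectral radius σ(A), provided A is not nilpotent. -/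
/-!
Gelfand's formula gives `‖A ^ k‖ ^ (1 / k) → σ(A)` for any submultiplicative norm; take the
`ℓ∞` operator norm (maximal row sum). For a matrix with nonnegative entries the entry sum
`N_k(A)` of `A ^ k` lies between `‖A ^ k‖` and `n * ‖A ^ k‖`, and `n ^ (1 / k) → 1`.
-/

/-- The spectral radius of a real matrix: the supremum of the moduli of its
(complex) eigenvalues. -/
noncomputable def specRad {n : ℕ} (M : Matrix (Fin n) (Fin n) ℝ) : ℝ :=
  sSup ((fun z : ℂ => ‖z‖) '' spectrum ℂ (M.map Complex.ofReal))

open Filter Topology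
open scoped NNReal ENNReal

theorem tendsto_rpow_inv_of_le_of_le_mul {u s : ℕ → ℝ} {C L : ℝ} (hu : ∀ k, 0 ≤ u k)
    (hus : ∀ k, u k ≤ s k) (hsu : ∀ k, s k ≤ C * u k)
    (h : Tendsto (fun k : ℕ => u k ^ (k : ℝ)⁻¹) atTop (𝓝 L)) :
    Tendsto (fun k : ℕ => s k ^ (k : ℝ)⁻¹) atTop (𝓝 L) := by
  set C' := max C 1
  have hC' : 0 < C' := lt_max_of_lt_right one_pos
  have hC'_rpow : Tendsto (fun k : ℕ => C' ^ (k : ℝ)⁻¹) atTop (𝓝 1) := by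
    have := (Real.continuousAt_const_rpow (b := 0) hC'.ne').tendsto.comp
      (tendsto_inv_atTop_zero.comp tendsto_natCast_atTop_atTop)
    simpa [Function.comp_def] using this
  refine tendsto_of_tendsto_of_tendsto_of_le_of_le h (by simpa using hC'_rpow.mul h)
    (fun k => Real.rpow_le_rpow (hu k) (hus k) (by positivity)) (fun k => ?_)
  calc s k ^ (k : ℝ)⁻¹ ≤ (C' * u k) ^ (k : ℝ)⁻¹ :=
        Real.rpow_le_rpow ((hu k).trans (hus k))
          ((hsu k).trans (mul_le_mul_of_nonneg_right (le_max_left _ _) (hu k))) (by positivity)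
    _ = C' ^ (k : ℝ)⁻¹ * u k ^ (k : ℝ)⁻¹ := Real.mul_rpow hC'.le (hu k)

namespace spectrum

variable {𝕜 A : Type*} [NormedField 𝕜] [NormedRing A] [NormedAlgebra 𝕜 A] [CompleteSpace A]

theorem spectralRadius_ne_top (a : A) : spectralRadius 𝕜 a ≠ ⊤ :=
  ne_top_of_le_ne_top (by finiteness) (spectralRadius_le_pow_nnnorm_pow_one_div 𝕜 a 0)

theorem sSup_norm_image_eq_toReal_spectralRadius [ProperSpace 𝕜] (a : A) :
    sSup ((‖·‖) '' spectrum 𝕜 a) = (spectralRadius 𝕜 a).toReal := by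
  rcases (spectrum 𝕜 a).eq_empty_or_nonempty with h | h
  · simp [h, spectralRadius]
  obtain ⟨z, hz, hz_eq⟩ := exists_nnnorm_eq_spectralRadius_of_nonempty h
  rw [← hz_eq, ENNReal.coe_toReal, coe_nnnorm]
  refine IsGreatest.csSup_eq ⟨⟨z, hz, rfl⟩, ?_⟩
  rintro _ ⟨w, hw, rfl⟩
  have : (‖w‖₊ : ℝ≥0∞) ≤ ‖z‖₊ := hz_eq ▸ le_iSup₂ (f := fun w _ => (‖w‖₊ : ℝ≥0∞)) w hw
  exact_mod_cast this

theorem tendsto_norm_pow_rpow_inv_toReal_spectralRadius {A : Type*} [NormedRing A]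
    [NormedAlgebra ℂ A] [CompleteSpace A] (a : A) :
    Tendsto (fun k : ℕ => ‖a ^ k‖ ^ (k : ℝ)⁻¹) atTop (𝓝 (spectralRadius ℂ a).toReal) := by
  convert (ENNReal.tendsto_toReal (spectralRadius_ne_top a)).comp
    (pow_nnnorm_pow_one_div_tendsto_nhds_spectralRadius a) using 2 with k
  rw [Function.comp_apply, ← ENNReal.toReal_rpow, one_div, ENNReal.coe_toReal, coe_nnnorm]

end spectrum

namespace Matrix

attribute [local instance] Matrix.linftyOpSeminormedAddCommGroup

variable {m n α : Type*} [Fintype m] [Fintype n] [SeminormedAddCommGroup α]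

theorem linfty_opNorm_le_sum_norm (M : Matrix m n α) : ‖M‖ ≤ ∑ i, ∑ j, ‖M i j‖ := by
  have : ‖M‖₊ ≤ ∑ i, ∑ j, ‖M i j‖₊ := linfty_opNNNorm_def M ▸ Finset.sup_le fun i _ =>
    Finset.single_le_sum (f := fun i => ∑ j, ‖M i j‖₊) (fun _ _ => zero_le) (Finset.mem_univ i)
  rw [← NNReal.coe_le_coe] at this
  push_cast at this
  exact this

theorem sum_norm_le_card_mul_linfty_opNorm (M : Matrix m n α) :
    ∑ i, ∑ j, ‖M i j‖ ≤ Fintype.card m * ‖M‖ := by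
  have : ∑ i, ∑ j, ‖M i j‖₊ ≤ Fintype.card m • ‖M‖₊ :=
    Finset.sum_le_card_nsmul _ _ _ fun i _ => linfty_opNNNorm_def M ▸
      Finset.le_sup (f := fun i => ∑ j, ‖M i j‖₊) (Finset.mem_univ i)
  rw [nsmul_eq_mul, ← NNReal.coe_le_coe] at this
  push_cast at this
  exact this

end Matrix

section LinftyOpNormedAlgebra

attribute [local instance] Matrix.linftyOpNormedRing Matrix.linftyOpNormedAlgebra

theorem specRad_eq_toReal_spectralRadius {n : ℕ} (M : Matrix (Fin n) (Fin n) ℝ) :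
    specRad M = (spectralRadius ℂ (M.map Complex.ofReal)).toReal :=
  spectrum.sSup_norm_image_eq_toReal_spectralRadius _

theorem Matrix.tendsto_sum_pow_rpow_inv_toReal_spectralRadius {ι : Type*} [Fintype ι]
    [DecidableEq ι] {A : Matrix ι ι ℝ} (hA : ∀ i j, 0 ≤ A i j) :
    Tendsto (fun k : ℕ => (∑ i, ∑ j, (A ^ k) i j) ^ (k : ℝ)⁻¹) atTop
      (𝓝 (spectralRadius ℂ (A.map Complex.ofReal)).toReal) := by
  set B := A.map Complex.ofReal
  have hB_pow (k : ℕ) : B ^ k = (A ^ k).map Complex.ofReal :=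
    (map_pow Complex.ofRealHom.mapMatrix A k).symm
  have h_sum (k : ℕ) : ∑ i, ∑ j, (A ^ k) i j = ∑ i, ∑ j, ‖(B ^ k) i j‖ := by
    simp [hB_pow, Real.norm_of_nonneg (pow_apply_nonneg hA k _ _)]
  refine tendsto_rpow_inv_of_le_of_le_mul (fun k => norm_nonneg (B ^ k))
    (fun k => h_sum k ▸ linfty_opNorm_le_sum_norm _)
    (fun k => h_sum k ▸ sum_norm_le_card_mul_linfty_opNorm _)
    (spectrum.tendsto_norm_pow_rpow_inv_toReal_spectralRadius B)

end LinftyOpNormedAlgebra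

theorem tendsto_entrySum_pow_rpow_specRad_general {n : ℕ} (A : Matrix (Fin n) (Fin n) ℝ)
    (hA : ∀ i j, ∃ m : ℕ, A i j = (m : ℝ)) :
    Filter.Tendsto (fun k : ℕ => (∑ i, ∑ j, (A ^ k) i j) ^ ((k : ℝ)⁻¹))
      Filter.atTop (nhds (specRad A)) := by
  rw [specRad_eq_toReal_spectralRadius]
  refine Matrix.tendsto_sum_pow_rpow_inv_toReal_spectralRadius fun i j => ?_
  obtain ⟨m, hm⟩ := hA i j
  exact hm ▸ m.cast_nonneg

/-- For a non-nilpotent nonnegative integer matrix A, with N_k(A) = eᵀA^k e the sum of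
entries of A^k, the limit lim_{k→∞} N_k(A)^{1/k} exists and equals the spectral
radius σ(A). -/
theorem tendsto_entrySum_pow_rpow_specRad {n : ℕ} (A : Matrix (Fin n) (Fin n) ℝ)
    (hA : ∀ i j, ∃ m : ℕ, A i j = (m : ℝ)) (hnil : ¬ IsNilpotent A) :
    Filter.Tendsto (fun k : ℕ => (∑ i, ∑ j, (A ^ k) i j) ^ ((k : ℝ)⁻¹))
      Filter.atTop (nhds (specRad A)) :=
  tendsto_entrySum_pow_rpow_specRad_general A hA
end
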